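/- Let g ∈ ℝⁿ be nonzero and H = ∇²ℓ symmetric with maximum absolute eigenvalue σ, α > 0, 0 < k ≤ 1. Define f̃(x) = k·(f(x) - c) + c where f(x) = x + α·g/‖g‖₂ (with constant g for differentiation at the given point). Then for all a ∈ ℝⁿ, ‖(∇f̃)ᵀ a‖₂ ≤ (1 + α·σ/‖g‖₂)·‖a‖₂. -/

import Mathlib

/-!
Everything is measured in the ℓ²-operator norm of matrices. Transposition preserves it and
`|k| ≤ 1`, so it suffices to bound `‖J‖ ≤ 1 + α‖1 - u uᵀ‖‖H‖/‖g‖`. Here `1 - u uᵀ` is a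
contraction because `‖u‖ ≤ 1`, and `‖H‖ ≤ σ` because unitary diagonalization reduces `‖H‖` to
the norm of the diagonal matrix of eigenvalues.
-/

open Matrix
open scoped Matrix.Norms.L2Operator RealInnerProductSpace

theorem norm_sub_inner_smul_le {E : Type*} [NormedAddCommGroup E] [InnerProductSpace ℝ E]
    {x : E} (hx : ‖x‖ ≤ 1) (y : E) : ‖y - ⟪x, y⟫ • x‖ ≤ ‖y‖ := by
  have hsq : ‖y - ⟪x, y⟫ • x‖ ^ 2 ≤ ‖y‖ ^ 2 := by
    rw [norm_sub_sq_real, norm_smul, inner_smul_right, real_inner_comm, Real.norm_eq_abs, mul_pow,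
      sq_abs]
    have hx2 : ‖x‖ ^ 2 ≤ 1 := pow_le_one₀ (norm_nonneg x) hx
    nlinarith [sq_nonneg ⟪x, y⟫]
  exact (sq_le_sq₀ (norm_nonneg _) (norm_nonneg _)).mp hsq

namespace Matrix

variable {n : Type*} [Fintype n] [DecidableEq n]

theorem toEuclideanLin_one_sub_vecMulVec_self (x y : EuclideanSpace ℝ n) :
    toEuclideanLin (1 - vecMulVec ⇑x ⇑x) y = y - ⟪x, y⟫ • x := by
  ext i
  simp [toLpLin_apply, vecMulVec_mulVec, PiLp.inner_apply, dotProduct, mul_comm]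

theorem l2_opNorm_one_sub_vecMulVec_self_le {x : EuclideanSpace ℝ n} (hx : ‖x‖ ≤ 1) :
    ‖1 - vecMulVec ⇑x ⇑x‖ ≤ 1 :=
  ContinuousLinearMap.opNorm_le_bound _ zero_le_one fun y => by
    rw [LinearEquiv.trans_apply, LinearMap.coe_toContinuousLinearMap',
      toEuclideanLin_one_sub_vecMulVec_self, one_mul]
    exact norm_sub_inner_smul_le hx y

theorem IsHermitian.l2_opNorm_le {H : Matrix n n ℝ} (hH : H.IsHermitian) {σ : ℝ}
    (hσ0 : 0 ≤ σ) (hσ : ∀ i, |hH.eigenvalues i| ≤ σ) : ‖H‖ ≤ σ := by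
  rw [hH.spectral_theorem, Unitary.conjStarAlgAut_apply,
    CStarRing.norm_mul_mem_unitary _ (Unitary.star_mem hH.eigenvectorUnitary.2),
    CStarRing.norm_mem_unitary_mul _ hH.eigenvectorUnitary.2, l2_opNorm_diagonal]
  exact pi_norm_le_iff_of_nonneg hσ0 |>.mpr fun i => by simpa using hσ i

theorem norm_toEuclideanLin_transpose_le (M : Matrix n n ℝ) (x : EuclideanSpace ℝ n) :
    ‖toEuclideanLin Mᵀ x‖ ≤ ‖M‖ * ‖x‖ := by
  rw [← conjTranspose_eq_transpose_of_trivial, ← l2_opNorm_conjTranspose M]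
  exact (toEuclideanCLM (𝕜 := ℝ) Mᴴ).le_opNorm x

end Matrix

theorem stmt_8_general {n : ℕ} (g : EuclideanSpace ℝ (Fin n))
    (H : Matrix (Fin n) (Fin n) ℝ) (hH : H.IsHermitian)
    (σ : ℝ) (hσ : ∀ i, |hH.eigenvalues i| ≤ σ)
    (α : ℝ) (hα : 0 < α) (k : ℝ) (hk0 : 0 < k) (hk1 : k ≤ 1)
    (u : Fin n → ℝ) (hu : u = fun i => ‖g‖⁻¹ * g i)
    (J : Matrix (Fin n) (Fin n) ℝ)
    (hJ : J = 1 + α • ((1 - Matrix.vecMulVec u u) * (‖g‖⁻¹ • H))) :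
    ∀ a : EuclideanSpace ℝ (Fin n),
      ‖Matrix.toEuclideanLin (k • J)ᵀ a‖ ≤ (1 + α * σ / ‖g‖) * ‖a‖ := by
  intro a
  rcases isEmpty_or_nonempty (Fin n) with hn | hn
  · simp [Subsingleton.elim a 0]
  have hσ0 : 0 ≤ σ := (abs_nonneg _).trans (hσ (Classical.arbitrary _))
  have hu_smul : u = ⇑(‖g‖⁻¹ • g) := hu
  have hu1 : ‖‖g‖⁻¹ • g‖ ≤ 1 := by
    rw [norm_smul, norm_inv, norm_norm]
    exact inv_mul_le_one
  have hJ_le : ‖J‖ ≤ 1 + α * σ / ‖g‖ :=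
    calc ‖J‖ ≤ 1 + α * (‖1 - vecMulVec u u‖ * (‖g‖⁻¹ * ‖H‖)) := by
          rw [hJ]
          refine (norm_add_le _ _).trans (add_le_add norm_one.le ?_)
          rw [norm_smul, Real.norm_of_nonneg hα.le]
          gcongr
          exact (norm_mul_le _ _).trans_eq (by rw [norm_smul, norm_inv, norm_norm])
      _ ≤ 1 + α * (1 * (‖g‖⁻¹ * σ)) := by
          rw [hu_smul]
          gcongr
          exacts [l2_opNorm_one_sub_vecMulVec_self_le hu1, hH.l2_opNorm_le hσ0 hσ]
      _ = 1 + α * σ / ‖g‖ := by ring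
  calc ‖toEuclideanLin (k • J)ᵀ a‖ ≤ ‖k • J‖ * ‖a‖ := norm_toEuclideanLin_transpose_le _ a
    _ = k * ‖J‖ * ‖a‖ := by rw [norm_smul, Real.norm_of_nonneg hk0.le]
    _ ≤ 1 * (1 + α * σ / ‖g‖) * ‖a‖ := by gcongr
    _ = (1 + α * σ / ‖g‖) * ‖a‖ := by rw [one_mul]

/-- Full Proposition 1: the composed step f̃ = Π ∘ f, with ∇f = J from Lemma 2 and
∇Π = k·I (0 < k ≤ 1), satisfies ‖(∇f̃)ᵀ a‖₂ ≤ (1 + ασ/‖g‖₂)‖a‖₂. -/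
theorem stmt_8 {n : ℕ} (g : EuclideanSpace ℝ (Fin n)) (hg : g ≠ 0)
    (H : Matrix (Fin n) (Fin n) ℝ) (hH : H.IsHermitian)
    (σ : ℝ) (hσ : ∀ i, |hH.eigenvalues i| ≤ σ)
    (α : ℝ) (hα : 0 < α) (k : ℝ) (hk0 : 0 < k) (hk1 : k ≤ 1)
    (u : Fin n → ℝ) (hu : u = fun i => ‖g‖⁻¹ * g i)
    (J : Matrix (Fin n) (Fin n) ℝ)
    (hJ : J = 1 + α • ((1 - Matrix.vecMulVec u u) * (‖g‖⁻¹ • H))) :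
    ∀ a : EuclideanSpace ℝ (Fin n),
      ‖Matrix.toEuclideanLin (k • J)ᵀ a‖ ≤ (1 + α * σ / ‖g‖) * ‖a‖ :=
  stmt_8_general g H hH σ hσ α hα k hk0 hk1 u hu J hJ
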